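/- Let f : ℝ × ℝ × ℝ × ℝ → ℝ, let δ and σ be real constants with δ ∉ {0, 1} and σ ≠ 0, and let u₀, v₀ ∈ ℝ. Suppose u : ℝ → ℝ is three times differentiable and solves the BVP (1.1) with vanishing asymptotic condition: u'''(x) = f(x, u(x), u'(x), u''(x)) for all x ≥ 0, u(0) = u₀, u'(0) = v₀, and u'(x) → 0 as x → ∞. Then for every λ > 0, setting h* := λ^σ, the function u*(x) := λ · u(λ^{−δ} x) satisfies the extended equation with parameter h*, the extended initial conditions u*(0) = h*^{1/σ} u₀ and u*'(0) = h*^{(1−δ)/σ} v₀, and u*'(x) → 0 as x → ∞; consequently, writing L = 0 for this limit, (L + h*^{(1−δ)/σ})^{1/(1−δ)} = h*^{1/σ}, i.e. h* is a zero of the transformation function Γ(h*) := ((L + h*^{(1−δ)/σ})^{1/(1−δ)})^{−σ} · h* − 1 built from the non-invariant asymptotic condition (2.8). -/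

import Mathlib

open Real Filter Topology

/-- `u` is three times differentiable. -/
def ThreeDiff (u : ℝ → ℝ) : Prop :=
  Differentiable ℝ u ∧ Differentiable ℝ (deriv u) ∧ Differentiable ℝ (deriv (deriv u))

/-- The extended equation with parameter `h` (powers are real powers of the positive real `h`). -/
def ExtEq (f : ℝ × ℝ × ℝ × ℝ → ℝ) (δ σ h : ℝ) (u : ℝ → ℝ) : Prop :=
  ∀ x : ℝ, 0 ≤ x → deriv (deriv (deriv u)) x =
    h ^ ((1 - 3 * δ) / σ) *
      f (h ^ (-δ / σ) * x, h ^ (-1 / σ) * u x,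
         h ^ ((δ - 1) / σ) * deriv u x, h ^ ((2 * δ - 1) / σ) * deriv (deriv u) x)

/-- `u` solves the BVP (1.1) with asymptotic value `vinf`. -/
def SolvesBVP (f : ℝ × ℝ × ℝ × ℝ → ℝ) (u₀ v₀ vinf : ℝ) (u : ℝ → ℝ) : Prop :=
  ThreeDiff u ∧
  (∀ x : ℝ, 0 ≤ x → deriv (deriv (deriv u)) x = f (x, u x, deriv u x, deriv (deriv u) x)) ∧
  u 0 = u₀ ∧ deriv u 0 = v₀ ∧ Tendsto (deriv u) atTop (𝓝 vinf)

private lemma deriv_scale (v : ℝ → ℝ) (hv : Differentiable ℝ v) (a b : ℝ) :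
    deriv (fun x => a * v (b * x)) = fun x => (a * b) * deriv v (b * x) := by
  funext x
  have hb : HasDerivAt (fun x : ℝ => b * x) b x := by
    simpa using (hasDerivAt_id x).const_mul b
  have h1 : HasDerivAt (fun x => a * v (b * x)) (a * (deriv v (b * x) * b)) x :=
    (((hv (b * x)).hasDerivAt.comp x hb)).const_mul a
  rw [h1.deriv]; ring

theorem stmt3 (f : ℝ × ℝ × ℝ × ℝ → ℝ) (δ σ : ℝ) (hδ0 : δ ≠ 0) (hδ1 : δ ≠ 1) (hσ : σ ≠ 0)
    (u₀ v₀ : ℝ)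
    (u : ℝ → ℝ) (hsol : SolvesBVP f u₀ v₀ 0 u) :
    ∀ lam : ℝ, 0 < lam → ∀ hstar : ℝ, hstar = lam ^ σ →
    ∀ ustar : ℝ → ℝ, ustar = (fun x => lam * u (lam ^ (-δ) * x)) →
    ExtEq f δ σ hstar ustar ∧
    ustar 0 = hstar ^ (1 / σ) * u₀ ∧
    deriv ustar 0 = hstar ^ ((1 - δ) / σ) * v₀ ∧
    Tendsto (deriv ustar) atTop (𝓝 0) ∧
    (∀ L : ℝ, Tendsto (deriv ustar) atTop (𝓝 L) →
      (L + hstar ^ ((1 - δ) / σ)) ^ (1 / (1 - δ)) = hstar ^ (1 / σ) ∧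
      ((L + hstar ^ ((1 - δ) / σ)) ^ (1 / (1 - δ))) ^ (-σ) * hstar - 1 = 0) := by
  intro lam hlam hstar hhs ustar hus
  obtain ⟨⟨hd1, hd2, hd3⟩, heq, hu0, hv0, htend⟩ := hsol
  set c : ℝ := lam ^ (-δ) with hc
  have hcpos : 0 < c := rpow_pos_of_pos hlam _
  have hpow : ∀ a : ℝ, hstar ^ (a / σ) = lam ^ a := by
    intro a
    rw [hhs, ← Real.rpow_mul hlam.le]
    congr 1
    field_simp
  have hlc : ∀ n : ℕ, lam * c ^ n = lam ^ (1 - (n : ℝ) * δ) := by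
    intro n
    rw [hc, ← Real.rpow_natCast (lam ^ (-δ)) n, ← Real.rpow_mul hlam.le]
    nth_rewrite 1 [← Real.rpow_one lam]
    rw [← Real.rpow_add hlam]
    congr 1
    ring
  have h1 : lam * c = lam ^ (1 - δ) := by
    have := hlc 1; simpa using this
  have h2 : lam * c * c = lam ^ (1 - 2 * δ) := by
    rw [mul_assoc, ← pow_two, hlc 2]; norm_num
  have h3 : lam * c * c * c = lam ^ (1 - 3 * δ) := by
    have hcc : lam * c * c * c = lam * c ^ 3 := by ring
    rw [hcc, hlc 3]; norm_num
  have hD1 : deriv ustar = fun x => (lam * c) * deriv u (c * x) := by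
    rw [hus]; exact deriv_scale u hd1 lam c
  have hD2 : deriv (deriv ustar) = fun x => (lam * c * c) * deriv (deriv u) (c * x) := by
    rw [hD1, deriv_scale (deriv u) hd2 (lam * c) c]
  have hD3 : deriv (deriv (deriv ustar)) =
      fun x => (lam * c * c * c) * deriv (deriv (deriv u)) (c * x) := by
    rw [hD2, deriv_scale (deriv (deriv u)) hd3 (lam * c * c) c]
  have htends : Tendsto (deriv ustar) atTop (𝓝 0) := by
    rw [hD1]
    have hct : Tendsto (fun x : ℝ => c * x) atTop atTop :=
      Tendsto.const_mul_atTop hcpos tendsto_id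
    have := (htend.comp hct).const_mul (lam * c)
    simpa using this
  have hinv : lam ^ (-(1 : ℝ)) = lam⁻¹ := by
    rw [Real.rpow_neg hlam.le, Real.rpow_one]
  refine ⟨?_, ?_, ?_, htends, ?_⟩
  · intro x hx
    have hcx : 0 ≤ c * x := mul_nonneg hcpos.le hx
    have hx4 : (hstar ^ (-δ / σ) * x, hstar ^ (-1 / σ) * ustar x,
        hstar ^ ((δ - 1) / σ) * deriv ustar x,
        hstar ^ ((2 * δ - 1) / σ) * deriv (deriv ustar) x) =
        (c * x, u (c * x), deriv u (c * x), deriv (deriv u) (c * x)) := by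
      rw [hpow, hpow, hpow, hpow, hD2, hD1, hus]
      simp only [Prod.mk.injEq]
      refine ⟨rfl, ?_, ?_, ?_⟩
      · rw [hinv, inv_mul_cancel_left₀ (ne_of_gt hlam)]
      · rw [h1, ← mul_assoc, ← Real.rpow_add hlam]
        norm_num
      · rw [h2, ← mul_assoc, ← Real.rpow_add hlam]
        norm_num
    rw [hx4, hpow, hD3]
    simp only []
    rw [h3, heq (c * x) hcx]
  · rw [hus, hpow, Real.rpow_one]
    simp [hu0]
  · rw [hD1, hpow]
    simp [h1, hv0]
  · intro L hL
    have hL0 : L = 0 := tendsto_nhds_unique hL htends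
    subst hL0
    have h1δ : (1 : ℝ) - δ ≠ 0 := sub_ne_zero.mpr fun h => hδ1 h.symm
    have key : (lam ^ (1 - δ)) ^ (1 / (1 - δ)) = lam := by
      rw [← Real.rpow_mul hlam.le, mul_one_div, div_self h1δ, Real.rpow_one]
    constructor
    · rw [hpow, hpow, zero_add, key, Real.rpow_one]
    · rw [hpow, zero_add, key, hhs, ← Real.rpow_add hlam]
      simp
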